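/- Suppose a ∉ atms(s') ∪ atms(l) and Δ ⊢ s' ≈α lσ. Then there exists a substitution σ' such that for all X ∈ unkn(l): Δ ⊢ σ(X) ≈α σ'(X) and a ∉ atms(σ'(X)). -/

import Mathlib

/-! Nominal terms: atoms, permutations, terms, actions, freshness, α-equivalence,
nominal rewriting and nominal algebra, closed rewriting. -/

abbrev Atom := ℕ
abbrev Unknown := ℕ

/-- Finitely supported permutations of atoms. -/
def FinPerm := {π : Equiv.Perm Atom // {a | π a ≠ a}.Finite}

namespace FinPerm

instance : CoeFun FinPerm (fun _ => Atom → Atom) := ⟨fun π => π.1⟩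

def id : FinPerm := ⟨Equiv.refl Atom, by simp⟩

/-- `comp π π'` is `π ∘ π'` (first apply `π'`, then `π`). -/
def comp (π π' : FinPerm) : FinPerm :=
  ⟨π'.1.trans π.1, ((π.2.union π'.2).subset (by
    intro a ha
    simp only [Set.mem_setOf_eq, Equiv.trans_apply] at ha
    by_cases h : π'.1 a = a
    · exact Or.inl (by simpa [h] using ha)
    · exact Or.inr h))⟩

def inv (π : FinPerm) : FinPerm :=
  ⟨π.1.symm, π.2.subset (by
    intro a ha h
    exact ha (π.1.symm_apply_eq.mpr h.symm))⟩

def swap (a b : Atom) : FinPerm :=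
  ⟨Equiv.swap a b, (Set.toFinite {a, b}).subset (by
    intro c hc
    by_contra h
    simp only [Set.mem_insert_iff, Set.mem_singleton_iff, not_or] at h
    exact hc (Equiv.swap_apply_of_ne_of_ne h.1 h.2))⟩

/-- The (finite) set of atoms moved by `π`. -/
noncomputable def nontriv (π : FinPerm) : Finset Atom := π.2.toFinset

end FinPerm

/-- Nominal terms: atoms, moderated unknowns `π·X`, abstractions `[a]t`,
and term-formers applied to lists of arguments. -/
inductive Term : Type where
  | atom : Atom → Term
  | var  : FinPerm → Unknown → Term
  | abs  : Atom → Term → Term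
  | app  : ℕ → List Term → Term

/-- Permutation action on terms. -/
def permAct (π : FinPerm) : Term → Term
  | .atom a => .atom (π a)
  | .var π' X => .var (π.comp π') X
  | .abs a t => .abs (π a) (permAct π t)
  | .app f ts => .app f (ts.attach.map fun t => permAct π t.1)
decreasing_by
  all_goals simp_wf
  have := List.sizeOf_lt_of_mem t.2
  omega

/-- Substitutions, represented as total maps (the default value of `X` is `id·X`). -/
def Subst := Unknown → Term

/-- A substitution has finite domain. -/
def Subst.FinDom (σ : Subst) : Prop := {X | σ X ≠ .var FinPerm.id X}.Finite

/-- Substitution action on terms. -/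
def subst (σ : Subst) : Term → Term
  | .atom a => .atom a
  | .var π X => permAct π (σ X)
  | .abs a t => .abs a (subst σ t)
  | .app f ts => .app f (ts.attach.map fun t => subst σ t.1)
decreasing_by
  all_goals simp_wf
  have := List.sizeOf_lt_of_mem t.2
  omega

/-- Composition of substitutions: `(σ.comp θ) X = (Xσ)θ`. -/
def Subst.comp (σ θ : Subst) : Subst := fun X => subst θ (σ X)

/-- `σ∘π`, mapping `X` to `π·(σ X)`. -/
def Subst.permComp (σ : Subst) (π : FinPerm) : Subst := fun X => permAct π (σ X)

mutual
/-- Atoms occurring in a term. -/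
noncomputable def atmsF : Term → Finset Atom
  | .atom a => {a}
  | .var π _ => π.nontriv
  | .abs a t => insert a (atmsF t)
  | .app _ ts => atmsLF ts
noncomputable def atmsLF : List Term → Finset Atom
  | [] => ∅
  | t :: ts => atmsF t ∪ atmsLF ts
end

mutual
/-- Unknowns occurring in a term. -/
def unknF : Term → Finset Unknown
  | .atom _ => ∅
  | .var _ X => {X}
  | .abs _ t => unknF t
  | .app _ ts => unknLF ts
def unknLF : List Term → Finset Unknown
  | [] => ∅
  | t :: ts => unknF t ∪ unknLF ts
end

/-- Freshness contexts: finite sets of primitive constraints `a#X`. -/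
abbrev Ctx := Finset (Atom × Unknown)

def ctxAtoms (Δ : Ctx) : Finset Atom := Δ.image Prod.fst
def ctxUnkns (Δ : Ctx) : Finset Unknown := Δ.image Prod.snd

/-- Derivable freshness judgements `Δ ⊢ a # t`. -/
inductive Fresh (Δ : Ctx) : Atom → Term → Prop where
  | atom {a b} : a ≠ b → Fresh Δ a (.atom b)
  | var {a π X} : (π.inv a, X) ∈ Δ → Fresh Δ a (.var π X)
  | absSame {a t} : Fresh Δ a (.abs a t)
  | absDiff {a b t} : a ≠ b → Fresh Δ a t → Fresh Δ a (.abs b t)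
  | app {a f ts} : (∀ t ∈ ts, Fresh Δ a t) → Fresh Δ a (.app f ts)

/-- Derivable α-equivalence judgements `Δ ⊢ s ≈α t`. -/
inductive Aeq (Δ : Ctx) : Term → Term → Prop where
  | atom {a} : Aeq Δ (.atom a) (.atom a)
  | var {π π' : FinPerm} {X : Unknown} : (∀ a : Atom, (π : Atom → Atom) a ≠ (π' : Atom → Atom) a → (a, X) ∈ Δ) →
      Aeq Δ (.var π X) (.var π' X)
  | absSame {a t u} : Aeq Δ t u → Aeq Δ (.abs a t) (.abs a u)
  | absDiff {a b t u} : a ≠ b → Fresh Δ b t → Aeq Δ (permAct (FinPerm.swap b a) t) u →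
      Aeq Δ (.abs a t) (.abs b u)
  | app {f ts us} : ts.length = us.length → (∀ p ∈ ts.zip us, Aeq Δ p.1 p.2) →
      Aeq Δ (.app f ts) (.app f us)

/-- Subterm relation. -/
inductive Subterm : Term → Term → Prop where
  | refl (t) : Subterm t t
  | abs {s t a} : Subterm s t → Subterm s (.abs a t)
  | app {s t f ts} : t ∈ ts → Subterm s t → Subterm s (.app f ts)

mutual
/-- Number of occurrences of the unknown `X` in a term. -/
def countUnk (X : Unknown) : Term → ℕ
  | .atom _ => 0
  | .var _ Y => if Y = X then 1 else 0
  | .abs _ t => countUnk X t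
  | .app _ ts => countUnkL X ts
def countUnkL (X : Unknown) : List Term → ℕ
  | [] => 0
  | t :: ts => countUnk X t + countUnkL X ts
end

/-- A position: a term with a distinguished unknown occurring exactly once, as `id·X`. -/
structure Position where
  ctx : Term
  hole : Unknown
  once : countUnk hole ctx = 1
  idOnly : ∀ π : FinPerm, Subterm (.var π hole) ctx → π = FinPerm.id

def fillAux (X : Unknown) (u : Term) : Term → Term
  | .atom a => .atom a
  | .var π Y => if Y = X then u else .var π Y
  | .abs a t => .abs a (fillAux X u t)
  | .app f ts => .app f (ts.attach.map fun t => fillAux X u t.1)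
decreasing_by
  all_goals simp_wf
  have := List.sizeOf_lt_of_mem t.2
  omega

/-- `C[u]`: place `u` in the hole of the position `C`. -/
def Position.fill (C : Position) (u : Term) : Term := fillAux C.hole u C.ctx

/-- A rule `∇ ⊢ l → r` (also used for axioms `∇ ⊢ l = r`). -/
structure Rule where
  ctx : Ctx
  lhs : Term
  rhs : Term

noncomputable def Rule.atms (R : Rule) : Finset Atom := ctxAtoms R.ctx ∪ atmsF R.lhs ∪ atmsF R.rhs
def Rule.unkn (R : Rule) : Finset Unknown := ctxUnkns R.ctx ∪ unknF R.lhs ∪ unknF R.rhs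

/-- `Δ ⊢ ∇θ`: every constraint of `∇`, instantiated by `θ`, is derivable from `Δ`. -/
def FreshSubst (Δ N : Ctx) (θ : Subst) : Prop :=
  ∀ p ∈ N, Fresh Δ p.1 (subst θ (.var FinPerm.id p.2))

/-- One-step nominal rewriting with the rule `R` in context `Δ`. -/
def OneStepR (R : Rule) (Δ : Ctx) (s t : Term) : Prop :=
  ∃ (C : Position) (s' : Term) (π : FinPerm) (θ : Subst),
    s = C.fill s' ∧ FreshSubst Δ R.ctx θ ∧
    Aeq Δ s' (permAct π (subst θ R.lhs)) ∧
    Aeq Δ (C.fill (permAct π (subst θ R.rhs))) t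

def OneStep (Rw : Set Rule) (Δ : Ctx) (s t : Term) : Prop := ∃ R ∈ Rw, OneStepR R Δ s t

/-- `Δ ⊢_R s ↔* t`: the reflexive-symmetric-transitive closure, including
α-equivalence, of one-step rewriting. -/
inductive RewEq (Rw : Set Rule) (Δ : Ctx) : Term → Term → Prop where
  | step {s t} : OneStep Rw Δ s t → RewEq Rw Δ s t
  | alpha {s t} : Aeq Δ s t → RewEq Rw Δ s t
  | symm {s t} : RewEq Rw Δ s t → RewEq Rw Δ t s
  | trans {s t u} : RewEq Rw Δ s t → RewEq Rw Δ t u → RewEq Rw Δ s u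

/-- Atoms of a judgement `(Δ, s, t)`. -/
noncomputable def judgeAtms (Δ : Ctx) (s t : Term) : Finset Atom := ctxAtoms Δ ∪ atmsF s ∪ atmsF t

def judgeUnkn (Δ : Ctx) (s t : Term) : Finset Unknown := ctxUnkns Δ ∪ unknF s ∪ unknF t

/-- `Γ` is a fresh context for a set of atoms `A`: its atoms avoid `A`. -/
def FreshFor (Γ : Ctx) (A : Finset Atom) : Prop := ∀ p ∈ Γ, p.1 ∉ A

/-- Nominal algebra equality `Δ ⊢_T s = t`. -/
inductive AlgEq (T : Set Rule) (Δ : Ctx) : Term → Term → Prop where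
  | axm {s t} (R : Rule) (hR : R ∈ T) (Γ : Ctx) (C : Position) (π : FinPerm) (θ : Subst) :
      FreshFor Γ (judgeAtms Δ s t) →
      FreshSubst (Δ ∪ Γ) R.ctx θ →
      Aeq (Δ ∪ Γ) s (C.fill (permAct π (subst θ R.lhs))) →
      Aeq (Δ ∪ Γ) (C.fill (permAct π (subst θ R.rhs))) t →
      AlgEq T Δ s t
  | refl (s) : AlgEq T Δ s s
  | symm {s t} : AlgEq T Δ s t → AlgEq T Δ t s
  | trans {s t u} : AlgEq T Δ s t → AlgEq T Δ t u → AlgEq T Δ s u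

/-- `Rw` is a presentation of the equational theory `T`. -/
def Presents (Rw : Set Rule) (T : Set Rule) : Prop :=
  ∀ R : Rule, R ∈ T ↔ (R ∈ Rw ∨ Rule.mk R.ctx R.rhs R.lhs ∈ Rw)

/-- Structural renaming of atoms (by a permutation `τ`) and unknowns (by `ρ`). -/
def renameT (τ : FinPerm) (ρ : Unknown → Unknown) : Term → Term
  | .atom a => .atom (τ a)
  | .var π X => .var (τ.comp (π.comp τ.inv)) (ρ X)
  | .abs a t => .abs (τ a) (renameT τ ρ t)
  | .app f ts => .app f (ts.attach.map fun t => renameT τ ρ t.1)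
decreasing_by
  all_goals simp_wf
  have := List.sizeOf_lt_of_mem t.2
  omega

def renameCtx (τ : FinPerm) (ρ : Unknown → Unknown) (Δ : Ctx) : Ctx :=
  Δ.image (fun p => (τ p.1, ρ p.2))

def Rule.rename (τ : FinPerm) (ρ : Unknown → Unknown) (R : Rule) : Rule :=
  ⟨renameCtx τ ρ R.ctx, renameT τ ρ R.lhs, renameT τ ρ R.rhs⟩

/-- `R'` is a freshened variant of `R`, avoiding also the atoms `A` and unknowns `U`. -/
def FreshenedVariant (A : Finset Atom) (U : Finset Unknown) (R R' : Rule) : Prop :=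
  ∃ (τ : FinPerm) (ρ : Equiv.Perm Unknown),
    R' = R.rename τ ρ ∧
    (∀ a ∈ R.atms, τ a ∉ A ∪ R.atms) ∧
    (∀ X ∈ R.unkn, (ρ X) ∉ U ∪ R.unkn)

/-- A rule (or axiom) `∇ ⊢ l → r` is closed: a freshened variant of `∇ ⊢ (l,r)` matches
`∇ ⊢ (l,r)` in the context `∇` extended with `atms(R') # unkn(R)`. -/
def Rule.Closed (R : Rule) : Prop :=
  ∃ R' : Rule, FreshenedVariant ∅ ∅ R R' ∧
    ∃ σ : Subst, (∀ X, X ∉ R'.unkn → σ X = .var FinPerm.id X) ∧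
      FreshSubst (R.ctx ∪ R'.atms ×ˢ R.unkn) R'.ctx σ ∧
      Aeq (R.ctx ∪ R'.atms ×ˢ R.unkn) (subst σ R'.lhs) R.lhs ∧
      Aeq (R.ctx ∪ R'.atms ×ˢ R.unkn) (subst σ R'.rhs) R.rhs

/-- One-step closed rewriting `Δ ⊢ s →c_R t`. -/
def ClosedStepR (R : Rule) (Δ : Ctx) (s t : Term) : Prop :=
  ∃ R' : Rule, FreshenedVariant (judgeAtms Δ s t ∪ R.atms) (judgeUnkn Δ s t ∪ R.unkn) R R' ∧
    ∃ (C : Position) (s' : Term) (θ : Subst),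
      s = C.fill s' ∧
      FreshSubst (Δ ∪ R'.atms ×ˢ judgeUnkn Δ s t) R'.ctx θ ∧
      Aeq (Δ ∪ R'.atms ×ˢ judgeUnkn Δ s t) s' (subst θ R'.lhs) ∧
      Aeq (Δ ∪ R'.atms ×ˢ judgeUnkn Δ s t) (C.fill (subst θ R'.rhs)) t

def ClosedStep (Rw : Set Rule) (Δ : Ctx) (s t : Term) : Prop := ∃ R ∈ Rw, ClosedStepR R Δ s t

/-- `Δ ⊢_R s ↔c* t`: reflexive-symmetric-transitive closure, including α-equivalence,
of one-step closed rewriting. -/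
inductive ClosedRewEq (Rw : Set Rule) (Δ : Ctx) : Term → Term → Prop where
  | step {s t} : ClosedStep Rw Δ s t → ClosedRewEq Rw Δ s t
  | alpha {s t} : Aeq Δ s t → ClosedRewEq Rw Δ s t
  | symm {s t} : ClosedRewEq Rw Δ s t → ClosedRewEq Rw Δ t s
  | trans {s t u} : ClosedRewEq Rw Δ s t → ClosedRewEq Rw Δ t u → ClosedRewEq Rw Δ s u

/-!
Induction on `l`. The only real case is a moderated unknown `π·X`: there `Δ ⊢ s' ≈α π·σ(X)`
and `π` fixes `a` (as `a ∉ nontriv π`), so by equivariance and symmetry of `≈α` the term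
`σ'(X) := π⁻¹·s'` is α-equivalent to `σ(X)` and still avoids `a`. Under an abstraction with
`s' = [b]s₀` matched against `[c](tσ)`, one continues with `(c b)·s₀`, which avoids `a`
because `a ∉ {b, c}`.
-/

namespace FinPerm

@[ext] theorem ext {π π' : FinPerm} (h : ∀ a, π a = π' a) : π = π' :=
  Subtype.ext (Equiv.ext h)

@[simp] theorem comp_apply (π π' : FinPerm) (a : Atom) : π.comp π' a = π (π' a) := rfl

@[simp] theorem id_apply (a : Atom) : FinPerm.id a = a := rfl

@[simp] theorem swap_apply (b c a : Atom) : swap b c a = Equiv.swap b c a := rfl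

@[simp] theorem inv_apply_apply (π : FinPerm) (a : Atom) : π.inv (π a) = a :=
  π.1.symm_apply_apply a

@[simp] theorem apply_inv_apply (π : FinPerm) (a : Atom) : π (π.inv a) = a :=
  π.1.apply_symm_apply a

theorem injective (π : FinPerm) : Function.Injective π := π.1.injective

theorem mem_nontriv {π : FinPerm} {a : Atom} : a ∈ π.nontriv ↔ π a ≠ a := by
  simp [nontriv]

@[simp] theorem id_comp (π : FinPerm) : FinPerm.id.comp π = π := by ext; simp

theorem comp_assoc (π₁ π₂ π₃ : FinPerm) : (π₁.comp π₂).comp π₃ = π₁.comp (π₂.comp π₃) := by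
  ext; simp

theorem inv_comp_self (π : FinPerm) : π.inv.comp π = FinPerm.id := by ext; simp

theorem inv_apply_eq_self {π : FinPerm} {a : Atom} (h : π a = a) : π.inv a = a :=
  (congrArg π.inv h).symm.trans (π.inv_apply_apply a)

theorem swap_comp_swap (b c : Atom) : (swap b c).comp (swap c b) = FinPerm.id := by
  ext; simp [Equiv.swap_comm c b]

theorem swap_apply_comp (π : FinPerm) (b c : Atom) :
    (swap (π b) (π c)).comp π = π.comp (swap b c) := by
  ext a
  simp only [comp_apply, swap_apply, Equiv.swap_apply_def, π.injective.eq_iff]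
  split_ifs <;> rfl

end FinPerm

@[induction_eliminator]
theorem Term.induction {motive : Term → Prop} (atom : ∀ a, motive (.atom a))
    (var : ∀ π X, motive (.var π X)) (abs : ∀ a t, motive t → motive (.abs a t))
    (app : ∀ f ts, (∀ t ∈ ts, motive t) → motive (.app f ts)) : ∀ t, motive t
  | .atom a => atom a
  | .var π X => var π X
  | .abs a t => abs a t (Term.induction atom var abs app t)
  | .app f ts => app f ts fun t _ => Term.induction atom var abs app t
decreasing_by
  all_goals simp_wf
  all_goals first
    | omega
    | (have := List.sizeOf_lt_of_mem ‹t ∈ ts›; omega)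

@[simp] theorem permAct_atom (π : FinPerm) (a : Atom) : permAct π (.atom a) = .atom (π a) := by
  simp [permAct]

@[simp] theorem permAct_var (π π' : FinPerm) (X : Unknown) :
    permAct π (.var π' X) = .var (π.comp π') X := by
  simp [permAct]

@[simp] theorem permAct_abs (π : FinPerm) (a : Atom) (t : Term) :
    permAct π (.abs a t) = .abs (π a) (permAct π t) := by
  simp [permAct]

@[simp] theorem permAct_app (π : FinPerm) (f : ℕ) (ts : List Term) :
    permAct π (.app f ts) = .app f (ts.map (permAct π)) := by
  rw [permAct]
  simp

@[simp] theorem subst_var (σ : Subst) (π : FinPerm) (X : Unknown) :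
    subst σ (.var π X) = permAct π (σ X) := by
  simp [subst]

@[simp] theorem subst_abs (σ : Subst) (a : Atom) (t : Term) :
    subst σ (.abs a t) = .abs a (subst σ t) := by
  simp [subst]

@[simp] theorem subst_app (σ : Subst) (f : ℕ) (ts : List Term) :
    subst σ (.app f ts) = .app f (ts.map (subst σ)) := by
  rw [subst]
  simp

@[simp] theorem atmsF_atom (a : Atom) : atmsF (.atom a) = {a} := by rw [atmsF]

@[simp] theorem atmsF_var (π : FinPerm) (X : Unknown) : atmsF (.var π X) = π.nontriv := by
  rw [atmsF]

@[simp] theorem atmsF_abs (a : Atom) (t : Term) : atmsF (.abs a t) = insert a (atmsF t) := by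
  rw [atmsF]

@[simp] theorem atmsF_app (f : ℕ) (ts : List Term) : atmsF (.app f ts) = atmsLF ts := by
  rw [atmsF]

@[simp] theorem atmsLF_nil : atmsLF [] = ∅ := by rw [atmsLF]

@[simp] theorem atmsLF_cons (t : Term) (ts : List Term) :
    atmsLF (t :: ts) = atmsF t ∪ atmsLF ts := by
  rw [atmsLF]

@[simp] theorem unknF_atom (a : Atom) : unknF (.atom a) = ∅ := by rw [unknF]

@[simp] theorem unknF_var (π : FinPerm) (X : Unknown) : unknF (.var π X) = {X} := by rw [unknF]

@[simp] theorem unknF_abs (a : Atom) (t : Term) : unknF (.abs a t) = unknF t := by rw [unknF]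

@[simp] theorem unknF_app (f : ℕ) (ts : List Term) : unknF (.app f ts) = unknLF ts := by
  rw [unknF]

@[simp] theorem unknLF_nil : unknLF [] = ∅ := by rw [unknLF]

@[simp] theorem unknLF_cons (t : Term) (ts : List Term) :
    unknLF (t :: ts) = unknF t ∪ unknLF ts := by
  rw [unknLF]

theorem mem_atmsLF {a : Atom} {ts : List Term} : a ∈ atmsLF ts ↔ ∃ t ∈ ts, a ∈ atmsF t := by
  induction ts with
  | nil => simp
  | cons t ts ih => simp [ih]

theorem mem_unknLF {X : Unknown} {ts : List Term} : X ∈ unknLF ts ↔ ∃ t ∈ ts, X ∈ unknF t := by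
  induction ts with
  | nil => simp
  | cons t ts ih => simp [ih]

theorem permAct_permAct (π π' : FinPerm) (t : Term) :
    permAct π (permAct π' t) = permAct (π.comp π') t := by
  induction t with
  | atom => simp
  | var => simp [FinPerm.comp_assoc]
  | abs _ _ ih => simp [ih]
  | app _ _ ih => simpa using ih

@[simp] theorem permAct_id (t : Term) : permAct FinPerm.id t = t := by
  induction t with
  | atom => simp
  | var => simp
  | abs _ _ ih => simp [ih]
  | app _ ts ih => simpa using List.map_congr_left ih

@[simp] theorem permAct_inv_permAct (π : FinPerm) (t : Term) : permAct π.inv (permAct π t) = t := by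
  rw [permAct_permAct, FinPerm.inv_comp_self, permAct_id]

theorem not_mem_atmsF_permAct {π : FinPerm} {a : Atom} (hπ : π a = a) {t : Term}
    (ht : a ∉ atmsF t) : a ∉ atmsF (permAct π t) := by
  induction t with
  | atom b =>
    rintro h
    simp only [permAct_atom, atmsF_atom, Finset.mem_singleton] at h
    exact ht (by simp [π.injective (hπ.trans h)])
  | var π' X =>
    simp only [permAct_var, atmsF_var, FinPerm.mem_nontriv, not_not, FinPerm.comp_apply] at ht ⊢
    rw [ht, hπ]
  | abs b t ih =>
    simp only [atmsF_abs, Finset.mem_insert, not_or, permAct_abs] at ht ⊢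
    exact ⟨fun h => ht.1 (π.injective (hπ.trans h)), ih ht.2⟩
  | app f ts ih =>
    simp only [permAct_app, atmsF_app, mem_atmsLF, List.mem_map] at ht ⊢
    rintro ⟨_, ⟨t, hts, rfl⟩, hat⟩
    exact ih t hts (fun h => ht ⟨t, hts, h⟩) hat

theorem List.exists_mem_zip_of_mem_right {α β : Type*} {l₁ : List α} {l₂ : List β}
    (h : l₁.length = l₂.length) {b : β} (hb : b ∈ l₂) : ∃ a, (a, b) ∈ l₁.zip l₂ := by
  induction l₁ generalizing l₂ with
  | nil =>
    obtain rfl := List.length_eq_zero_iff.mp h.symm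
    simp at hb
  | cons a l₁ ih =>
    obtain _ | ⟨b', l₂⟩ := l₂
    · simp at hb
    · rcases List.mem_cons.mp hb with rfl | hb
      · exact ⟨a, by simp⟩
      · obtain ⟨a', ha'⟩ := ih (Nat.succ.inj h) hb
        exact ⟨a', by simp [ha']⟩

theorem Fresh.permAct {Δ : Ctx} {a : Atom} {t : Term} (h : Fresh Δ a t) (π : FinPerm) :
    Fresh Δ (π a) (permAct π t) := by
  induction h with
  | atom hne =>
    rw [permAct_atom]
    exact Fresh.atom fun h => hne (π.injective h)
  | var hmem =>
    rw [permAct_var]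
    exact Fresh.var (by simpa [FinPerm.inv, FinPerm.comp] using hmem)
  | absSame =>
    rw [permAct_abs]
    exact Fresh.absSame
  | absDiff hne _ ih =>
    rw [permAct_abs]
    exact Fresh.absDiff (fun h => hne (π.injective h)) ih
  | app _ ih =>
    rw [permAct_app]
    exact Fresh.app fun u hu => by
      obtain ⟨t, ht, rfl⟩ := List.mem_map.mp hu
      exact ih t ht

theorem Aeq.permAct {Δ : Ctx} {s t : Term} (h : Aeq Δ s t) (π : FinPerm) :
    Aeq Δ (permAct π s) (permAct π t) := by
  induction h with
  | atom =>
    rw [permAct_atom]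
    exact Aeq.atom
  | var hΔ =>
    simp only [permAct_var]
    exact Aeq.var fun c hc => hΔ c fun h => hc (by simp [h])
  | absSame _ ih =>
    simp only [permAct_abs]
    exact Aeq.absSame ih
  | absDiff hne hf _ ih =>
    simp only [permAct_abs]
    refine Aeq.absDiff (fun h => hne (π.injective h)) (hf.permAct π) ?_
    rwa [permAct_permAct, FinPerm.swap_apply_comp, ← permAct_permAct]
  | app hlen _ ih =>
    simp only [permAct_app]
    refine Aeq.app (by simp [hlen]) fun p hp => ?_
    rw [List.zip_map] at hp
    obtain ⟨q, hq, rfl⟩ := List.mem_map.mp hp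
    exact ih q hq

theorem Fresh.of_aeq {Δ : Ctx} {c : Atom} {s t : Term} (hf : Fresh Δ c s) (h : Aeq Δ s t) :
    Fresh Δ c t := by
  induction h with
  | atom => exact hf
  | @var π₁ π₂ X hΔ =>
    cases hf with
    | var hmem =>
      refine Fresh.var ?_
      by_cases hd : π₂.inv c = π₁.inv c
      · rwa [hd]
      · refine hΔ _ fun h => hd ?_
        rw [← π₁.inv_apply_apply (π₂.inv c), h, FinPerm.apply_inv_apply]
  | absSame _ ih =>
    cases hf with
    | absSame => exact Fresh.absSame
    | absDiff hne hft => exact Fresh.absDiff hne (ih hft)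
  | @absDiff b d t u _ hfd _ ih =>
    by_cases hcd : c = d
    · subst hcd
      exact Fresh.absSame
    refine Fresh.absDiff hcd (ih ?_)
    cases hf with
    | absSame => simpa using hfd.permAct (FinPerm.swap d c)
    | absDiff hcb hft =>
      simpa [Equiv.swap_apply_of_ne_of_ne hcd hcb] using hft.permAct (FinPerm.swap d b)
  | app hlen _ ih =>
    cases hf with
    | app hts =>
      refine Fresh.app fun u hu => ?_
      obtain ⟨t, htu⟩ := List.exists_mem_zip_of_mem_right hlen hu
      exact ih _ htu (hts t (List.of_mem_zip htu).1)

theorem Aeq.symm {Δ : Ctx} {s t : Term} (h : Aeq Δ s t) : Aeq Δ t s := by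
  induction h with
  | atom => exact Aeq.atom
  | var hΔ => exact Aeq.var fun c hc => hΔ c (Ne.symm hc)
  | absSame _ ih => exact Aeq.absSame ih
  | @absDiff b c t u hne hf h ih =>
    refine Aeq.absDiff (Ne.symm hne) ?_ ?_
    · simpa using (hf.permAct (FinPerm.swap c b)).of_aeq h
    · simpa [permAct_permAct, FinPerm.swap_comp_swap] using ih.permAct (FinPerm.swap b c)
  | app hlen _ ih =>
    refine Aeq.app hlen.symm fun p hp => ih p.swap ?_
    rw [← List.zip_swap]
    exact List.mem_map_of_mem hp

theorem exists_aeq_not_mem_atmsF_of_aeq_subst {Δ : Ctx} {a : Atom} {σ : Subst} {l : Term} :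
    ∀ {s : Term} {X : Unknown}, Aeq Δ s (subst σ l) → a ∉ atmsF s → a ∉ atmsF l →
      X ∈ unknF l → ∃ u, Aeq Δ (σ X) u ∧ a ∉ atmsF u := by
  induction l with
  | atom => simp
  | var π Y =>
    intro s X h hs hl hX
    rw [unknF_var, Finset.mem_singleton] at hX
    subst hX
    rw [atmsF_var, FinPerm.mem_nontriv, not_not] at hl
    refine ⟨permAct π.inv s, ?_, not_mem_atmsF_permAct (FinPerm.inv_apply_eq_self hl) hs⟩
    simpa using h.symm.permAct π.inv
  | abs c t ih =>
    intro s X h hs hl hX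
    rw [atmsF_abs, Finset.mem_insert, not_or] at hl
    rw [subst_abs] at h
    cases h with
    | absSame h => exact ih h (fun h' => hs (by simp [h'])) hl.2 hX
    | @absDiff b _ s₀ _ _ _ h =>
      rw [atmsF_abs, Finset.mem_insert, not_or] at hs
      have hfix : FinPerm.swap c b a = a := by
        simp [Equiv.swap_apply_of_ne_of_ne hl.1 hs.1]
      exact ih h (not_mem_atmsF_permAct hfix hs.2) hl.2 hX
  | app f ts ih =>
    intro s X h hs hl hX
    rw [unknF_app, mem_unknLF] at hX
    obtain ⟨t, ht, hXt⟩ := hX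
    rw [subst_app] at h
    cases h with
    | app hlen hall =>
      obtain ⟨u, hu⟩ := List.exists_mem_zip_of_mem_right hlen (List.mem_map_of_mem ht)
      refine ih t ht (hall _ hu) (fun h' => hs ?_) (fun h' => hl ?_) hXt
      · exact mem_atmsLF.mpr ⟨u, (List.of_mem_zip hu).1, h'⟩
      · exact mem_atmsLF.mpr ⟨t, ht, h'⟩

/-- If `a ∉ atms(s') ∪ atms(l)` and `Δ ⊢ s' ≈α lσ`, then there is a substitution `σ'` with
`Δ ⊢ σ(X) ≈α σ'(X)` and `a ∉ atms(σ'(X))` for all `X ∈ unkn(l)`. -/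
theorem avoid_atom_in_matching (Δ : Ctx) (a : Atom) (s' l : Term) (σ : Subst) (hσ : σ.FinDom)
    (ha : a ∉ atmsF s' ∪ atmsF l) (h : Aeq Δ s' (subst σ l)) :
    ∃ σ' : Subst, σ'.FinDom ∧
      ∀ X ∈ unknF l, Aeq Δ (σ X) (σ' X) ∧ a ∉ atmsF (σ' X) := by
  classical
  rw [Finset.mem_union, not_or] at ha
  choose u hu using fun X (hX : X ∈ unknF l) =>
    exists_aeq_not_mem_atmsF_of_aeq_subst h ha.1 ha.2 hX
  refine ⟨fun X => if hX : X ∈ unknF l then u X hX else .var FinPerm.id X, ?_, fun X hX => ?_⟩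
  · exact (unknF l).finite_toSet.subset fun X hX => by_contra fun hX' => hX (dif_neg hX')
  · simpa only [dif_pos hX] using hu X hX
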